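/- Let R > √2 and h ≥ 1. Any valid h-hop coloring φ of ℤ² (with radio range R) has the property that any two distinct nodes of the same color are at Euclidean distance strictly greater than (R − √2)·h. -/

import Mathlib

/-- Euclidean distance between two grid points. -/
noncomputable def gridDist (U V : ℤ × ℤ) : ℝ :=
  Real.sqrt (((U.1 - V.1 : ℤ) : ℝ)^2 + ((U.2 - V.2 : ℤ) : ℝ)^2)

/-- `U` is at most `h` hops from `V` for radio range `R`. -/
def AtMostHops (R : ℝ) (h : ℕ) (U V : ℤ × ℤ) : Prop :=
  ∃ k ≤ h, ∃ W : ℕ → ℤ × ℤ, W 0 = U ∧ W k = V ∧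
    ∀ i < k, 0 < gridDist (W i) (W (i+1)) ∧ gridDist (W i) (W (i+1)) ≤ R

/-!
Embed the grid in `ℂ`. If `U` and `V` are farther apart than `R`, walk the distance `R - √2/2`
from `U` towards `V` and round to the nearest lattice point `W`, which is within `√2/2`.
Then `W` is one hop from `U` (its distance to `U` lies in `[R - √2, R]`), while the distance
to `V` drops by at least `R - √2`. By induction on `h`, grid points at distance at most
`(R - √2) h` are at most `h` hops apart, so a valid `h`-hop coloring separates them.
-/

lemma exists_dist_left_eq_dist_right_eq {E : Type*} [NormedAddCommGroup E] [NormedSpace ℝ E]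
    (u v : E) {r : ℝ} (hr : 0 ≤ r) (hrd : r ≤ dist u v) :
    ∃ P : E, dist u P = r ∧ dist P v = dist u v - r := by
  have hd : 0 ≤ dist u v := dist_nonneg
  have ht0 : 0 ≤ r / dist u v := div_nonneg hr hd
  have ht1 : r / dist u v ≤ 1 := div_le_one_of_le₀ hrd hd
  have hcancel : r / dist u v * dist u v = r :=
    div_mul_cancel_of_imp fun h0 => le_antisymm (h0 ▸ hrd) hr
  refine ⟨AffineMap.lineMap u v (r / dist u v), ?_, ?_⟩
  · rw [dist_left_lineMap, Real.norm_of_nonneg ht0, hcancel]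
  · rw [dist_lineMap_right, Real.norm_of_nonneg (sub_nonneg.mpr ht1), sub_mul, one_mul, hcancel]

noncomputable def toComplex (U : ℤ × ℤ) : ℂ := ⟨U.1, U.2⟩

lemma toComplex_injective : Function.Injective toComplex := fun U V h => by
  have h1 : (U.1 : ℝ) = V.1 := congrArg Complex.re h
  have h2 : (U.2 : ℝ) = V.2 := congrArg Complex.im h
  exact Prod.ext (by exact_mod_cast h1) (by exact_mod_cast h2)

lemma gridDist_eq_dist (U V : ℤ × ℤ) : gridDist U V = dist (toComplex U) (toComplex V) := by
  simp [gridDist, Complex.dist_eq_re_im, toComplex]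

lemma gridDist_pos {U V : ℤ × ℤ} (hUV : U ≠ V) : 0 < gridDist U V := by
  rw [gridDist_eq_dist]
  exact dist_pos.mpr (toComplex_injective.ne hUV)

lemma dist_toComplex_round_le (z : ℂ) :
    dist (toComplex (round z.re, round z.im)) z ≤ √2 / 2 := by
  have hre : |((round z.re : ℤ) : ℝ) - z.re| ≤ 1 / 2 := by
    rw [abs_sub_comm]; exact abs_sub_round z.re
  have him : |((round z.im : ℤ) : ℝ) - z.im| ≤ 1 / 2 := by
    rw [abs_sub_comm]; exact abs_sub_round z.im
  calc dist (toComplex (round z.re, round z.im)) z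
      ≤ √2 * max |((round z.re : ℤ) : ℝ) - z.re| |((round z.im : ℤ) : ℝ) - z.im| := by
        simpa [dist_eq_norm, toComplex] using
          Complex.norm_le_sqrt_two_mul_max (toComplex (round z.re, round z.im) - z)
    _ ≤ √2 * (1 / 2) := by gcongr; exact max_le hre him
    _ = √2 / 2 := by ring

lemma exists_gridDist_near_segment (U V : ℤ × ℤ) {r : ℝ} (hr : 0 ≤ r) (hrd : r ≤ gridDist U V) :
    ∃ W : ℤ × ℤ, |gridDist U W - r| ≤ √2 / 2 ∧ gridDist W V ≤ gridDist U V - r + √2 / 2 := by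
  simp only [gridDist_eq_dist] at hrd ⊢
  obtain ⟨P, huP, hPv⟩ := exists_dist_left_eq_dist_right_eq (toComplex U) (toComplex V) hr hrd
  set W : ℤ × ℤ := (round P.re, round P.im)
  have hWP := dist_toComplex_round_le P
  refine ⟨W, abs_le.mpr ⟨?_, ?_⟩, ?_⟩
  · linarith [dist_triangle (toComplex U) (toComplex W) P]
  · linarith [dist_triangle_right (toComplex U) (toComplex W) P]
  · linarith [dist_triangle (toComplex W) P (toComplex V)]

lemma AtMostHops.refl (R : ℝ) (h : ℕ) (U : ℤ × ℤ) : AtMostHops R h U U :=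
  ⟨0, Nat.zero_le h, fun _ => U, rfl, rfl, fun _ hi => absurd hi (Nat.not_lt_zero _)⟩

lemma AtMostHops.cons {R : ℝ} {h : ℕ} {U W V : ℤ × ℤ} (hpos : 0 < gridDist U W)
    (hle : gridDist U W ≤ R) (hWV : AtMostHops R h W V) : AtMostHops R (h + 1) U V := by
  obtain ⟨k, hk, path, h0, hend, hhops⟩ := hWV
  refine ⟨k + 1, Nat.succ_le_succ hk, fun | 0 => U | n + 1 => path n, rfl, hend, ?_⟩
  rintro (_ | i) hi
  · simpa [h0] using And.intro hpos hle
  · exact hhops i (Nat.lt_of_succ_lt_succ hi)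

lemma atMostHops_of_gridDist_le {R : ℝ} (hR : √2 < R) (h : ℕ) (U V : ℤ × ℤ)
    (hUV : gridDist U V ≤ (R - √2) * h) : AtMostHops R h U V := by
  induction h generalizing U with
  | zero =>
    obtain rfl : U = V := by_contra fun hne => (gridDist_pos hne).not_ge (by simpa using hUV)
    exact AtMostHops.refl R 0 U
  | succ h ih =>
    rcases le_or_gt (gridDist U V) R with hnear | hfar
    · obtain rfl | hne := eq_or_ne U V
      · exact AtMostHops.refl R _ U
      · exact AtMostHops.cons (gridDist_pos hne) hnear (AtMostHops.refl R h V)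
    · have hsqrt := Real.sqrt_nonneg 2
      obtain ⟨W, hUW, hWV⟩ :=
        exists_gridDist_near_segment U V (r := R - √2 / 2) (by linarith) (by linarith)
      rw [abs_le] at hUW
      refine AtMostHops.cons (by linarith) (by linarith) (ih W ?_)
      push_cast at hUV
      linarith

theorem same_color_far_general {C : Type*} (R : ℝ) (hR : R > Real.sqrt 2)
    (h : ℕ) (φ : ℤ × ℤ → C)
    (hvalid : ∀ U V : ℤ × ℤ, U ≠ V → AtMostHops R h U V → φ U ≠ φ V) :
    ∀ U V : ℤ × ℤ, U ≠ V → φ U = φ V → gridDist U V > (R - Real.sqrt 2) * h := by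
  intro U V hne hcolor
  by_contra! hclose
  exact hvalid U V hne (atMostHops_of_gridDist_le hR h U V hclose) hcolor

theorem same_color_far {C : Type*} (R : ℝ) (hR : R > Real.sqrt 2)
    (h : ℕ) (hh : 1 ≤ h) (φ : ℤ × ℤ → C)
    (hvalid : ∀ U V : ℤ × ℤ, U ≠ V → AtMostHops R h U V → φ U ≠ φ V) :
    ∀ U V : ℤ × ℤ, U ≠ V → φ U = φ V → gridDist U V > (R - Real.sqrt 2) * h :=
  same_color_far_general R hR h φ hvalid
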